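/- arXiv:1603.06122 — 3 statements merged into one kernel-verified Lean document; each statement's English description precedes it below -/
import Mathlib

section
/- Let f be a low-defect polynomial of degree r. Then every monomial appearing in f other than the leading monomial x₁⋯x_r omits at least one variable that is minimal with respect to the nesting order of f; that is, for each such monomial m there is a minimal variable x with x ∤ m. -/
/-- `CpxW n k` : the positive integer `n` can be written using exactly `k` ones,
with an arbitrary combination of additions and multiplications. -/
inductive CpxW : ℕ → ℕ → Prop
  | one : CpxW 1 1
  | add {a b m n : ℕ} : CpxW a m → CpxW b n → CpxW (a + b) (m + n)
  | mul {a b m n : ℕ} : CpxW a m → CpxW b n → CpxW (a * b) (m + n)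

/-- The integer complexity `‖n‖`: the least number of 1's needed to write `n`
using additions and multiplications. -/
noncomputable def cpx (n : ℕ) : ℕ := sInf {k | CpxW n k}

/-- The defect `δ(n) = ‖n‖ - 3 log₃ n`. -/
noncomputable def defect (n : ℕ) : ℝ := (cpx n : ℝ) - 3 * Real.logb 3 (n : ℝ)

/-- `LDP r f C` : `(f, C)` is a low-defect pair of degree `r`; here a low-defect
polynomial of degree `r` is written in the variables `X 0, …, X (r-1)`. -/
inductive LDP : ℕ → MvPolynomial ℕ ℤ → ℕ → Prop
  | const (k C : ℕ) (hk : 0 < k) (hC : cpx k ≤ C) :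
      LDP 0 (MvPolynomial.C (k : ℤ)) C
  | mul {r₁ r₂ : ℕ} {f₁ f₂ : MvPolynomial ℕ ℤ} {C₁ C₂ : ℕ} :
      LDP r₁ f₁ C₁ → LDP r₂ f₂ C₂ →
      LDP (r₁ + r₂) (f₁ * MvPolynomial.rename (· + r₁) f₂) (C₁ + C₂)
  | step {r : ℕ} {f : MvPolynomial ℕ ℤ} {C : ℕ} (c D : ℕ) (hc : 0 < c) (hD : cpx c ≤ D) :
      LDP r f C → LDP (r + 1) (f * MvPolynomial.X r + MvPolynomial.C (c : ℤ)) (C + D)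

/-- A low-defect polynomial: the first component of some low-defect pair. -/
def LowDefectPoly (f : MvPolynomial ℕ ℤ) : Prop := ∃ r C, LDP r f C

/-- The leading coefficient of a low-defect polynomial of degree `r`:
the coefficient of `x₁ ⋯ x_r`. -/
noncomputable def leadCoeff (r : ℕ) (f : MvPolynomial ℕ ℤ) : ℤ :=
  MvPolynomial.coeff (∑ i ∈ Finset.range r, Finsupp.single i 1) f

/-- The defect `δ(f,C) = C - 3 log₃ a` of a low-defect pair of degree `r`,
where `a` is the leading coefficient. -/
noncomputable def pairDft (r : ℕ) (f : MvPolynomial ℕ ℤ) (C : ℕ) : ℝ :=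
  (C : ℝ) - 3 * Real.logb 3 ((leadCoeff r f : ℤ) : ℝ)

/-- `f(3^{k₁}, …, 3^{k_r})` for a polynomial of degree `r`. -/
noncomputable def eval3 (r : ℕ) (f : MvPolynomial ℕ ℤ) (k : ℕ → ℕ) : ℤ :=
  MvPolynomial.eval (fun i => if i < r then (3 : ℤ) ^ (k i) else 1) f

/-- `δ_{f,C}(k₁,…,k_r) = C + 3(k₁+⋯+k_r) - 3 log₃ f(3^{k₁},…,3^{k_r})`. -/
noncomputable def dftF (r : ℕ) (f : MvPolynomial ℕ ℤ) (C : ℕ) (k : ℕ → ℕ) : ℝ :=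
  (C : ℝ) + 3 * (∑ i ∈ Finset.range r, (k i : ℝ))
    - 3 * Real.logb 3 ((eval3 r f k : ℤ) : ℝ)

/-- The nesting order: `NestLe f i j` means `xᵢ ⪯ xⱼ`, i.e. every monomial of `f`
divisible by `xᵢ` is divisible by `xⱼ`. -/
def NestLe (f : MvPolynomial ℕ ℤ) (i j : ℕ) : Prop :=
  ∀ m ∈ f.support, m i ≠ 0 → m j ≠ 0

/-- `xᵢ` is a variable of (the degree-`r` polynomial) `f` that is minimal with
respect to the nesting order. -/
def IsMinVar (r : ℕ) (f : MvPolynomial ℕ ℤ) (i : ℕ) : Prop :=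
  i < r ∧ ∀ j < r, NestLe f j i → NestLe f i j

/-- Substituting `3^k` for the variable `xᵢ` of `f`, renumbering the later
variables down by one. -/
noncomputable def truncAt (f : MvPolynomial ℕ ℤ) (i k : ℕ) : MvPolynomial ℕ ℤ :=
  MvPolynomial.aeval (fun j => if j < i then MvPolynomial.X j
    else if j = i then MvPolynomial.C ((3 : ℤ) ^ k) else MvPolynomial.X (j - 1)) f

/-- A direct truncation of a "pair with degree" `(r, f, C)`: substitute `3^k`
into a variable of `f` minimal in the nesting order. -/
def DirectTrunc (a b : ℕ × MvPolynomial ℕ ℤ × ℕ) : Prop :=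
  ∃ i k : ℕ, a.1 = b.1 + 1 ∧ IsMinVar a.1 a.2.1 i ∧
    b.2.1 = truncAt a.2.1 i k ∧ b.2.2 = a.2.2 + 3 * k

/-- `n` is a leader: either `3 ∤ n`, or `3 ∣ n` and `‖n‖ < ‖n/3‖ + 3`. -/
def IsLeader (n : ℕ) : Prop := 0 < n ∧ (3 ∣ n → cpx n < cpx (n / 3) + 3)

/-- `(f, C)` (of degree `r`) efficiently 3-represents `n`. -/
def EffRep (r : ℕ) (f : MvPolynomial ℕ ℤ) (C : ℕ) (n : ℕ) : Prop :=
  ∃ k : ℕ → ℕ, (n : ℤ) = eval3 r f k ∧ cpx n = C + 3 * ∑ i ∈ Finset.range r, k i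

/-- The number of `∗`-entries (free coordinates) of `p` among `0, …, r-1`. -/
def starCount (r : ℕ) (p : ℕ → Option ℕ) : ℕ :=
  ((Finset.range r).filter (fun i => p i = none)).card

/-- The 3-substitution of a tuple `p ∈ (ℤ≥0 ∪ {∗})^r` into `f`: substitute
`3^{kᵢ}` for `xᵢ` whenever `p i = some kᵢ`, renumbering the surviving variables
in increasing order. -/
noncomputable def subst3 (f : MvPolynomial ℕ ℤ) (p : ℕ → Option ℕ) : MvPolynomial ℕ ℤ :=
  MvPolynomial.aeval (fun j =>
    match p j with
    | some k => MvPolynomial.C ((3 : ℤ) ^ k)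
    | none => MvPolynomial.X (((Finset.range j).filter (fun i => p i = none)).card)) f

/-- The insertion map `ι` associated to `p`: inserts the arguments into the
coordinates of `p` equal to `∗`. -/
def iotaMap (p : ℕ → Option ℕ) (ℓ : ℕ → ℕ) : ℕ → ℕ := fun j =>
  match p j with
  | some k => k
  | none => ℓ (((Finset.range j).filter (fun i => p i = none)).card)

/-! Every variable lies above some minimal variable in the nesting order, and a monomial divisible
by a variable is divisible by everything above it. So a monomial divisible by every minimal
variable is divisible by every variable; since low-defect polynomials are multilinear in
`x₀, …, x_{r-1}`, it must be the leading monomial. -/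

theorem Finset.exists_minimal_rel_le {α : Type*} (s : Finset α) (R : α → α → Prop)
    [IsPreorder α R] {b : α} (hb : b ∈ s) :
    ∃ a ∈ s, R a b ∧ ∀ c ∈ s, R c a → R a c := by
  classical
  -- a minimal element below `b` is one whose lower set in `s` has least cardinality
  obtain ⟨a, ha, hleast⟩ := (s.filter (R · b)).exists_min_image
    (fun a => (s.filter (R · a)).card) ⟨b, Finset.mem_filter.2 ⟨hb, refl_of R b⟩⟩
  rw [Finset.mem_filter] at ha
  refine ⟨a, ha.1, ha.2, fun c hc hca => ?_⟩
  by_contra hac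
  have hlower : s.filter (R · c) ⊂ s.filter (R · a) := by
    rw [Finset.ssubset_iff_of_subset
      (Finset.monotone_filter_right s fun _ _ hdc => trans_of R hdc hca)]
    exact ⟨a, Finset.mem_filter.2 ⟨ha.1, refl_of R a⟩, fun h => hac (Finset.mem_filter.1 h).2⟩
  exact (Finset.card_lt_card hlower).not_ge
    (hleast c (Finset.mem_filter.2 ⟨hc, trans_of R hca ha.2⟩))

section NestingOrder

variable {f : MvPolynomial ℕ ℤ} {r : ℕ}

instance (f : MvPolynomial ℕ ℤ) : IsPreorder ℕ (NestLe f) where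
  refl _ _ _ h := h
  trans _ _ _ hij hjk m hm h := hjk m hm (hij m hm h)

theorem exists_isMinVar_nestLe {j : ℕ} (hj : j < r) : ∃ i, IsMinVar r f i ∧ NestLe f i j := by
  obtain ⟨i, hi, hij, hmin⟩ := (Finset.range r).exists_minimal_rel_le (NestLe f)
    (Finset.mem_range.2 hj)
  exact ⟨i, ⟨Finset.mem_range.1 hi, fun k hk => hmin k (Finset.mem_range.2 hk)⟩, hij⟩

theorem apply_ne_zero_of_forall_isMinVar {m : ℕ →₀ ℕ} (hm : m ∈ f.support)
    (hmin : ∀ i, IsMinVar r f i → m i ≠ 0) {j : ℕ} (hj : j < r) : m j ≠ 0 := by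
  obtain ⟨i, hi, hij⟩ := exists_isMinVar_nestLe hj
  exact hij m hm (hmin i hi)

end NestingOrder

section LeadingMonomial

open Finsupp

noncomputable def leadMonomial (r : ℕ) : ℕ →₀ ℕ := ∑ i ∈ Finset.range r, single i 1

theorem leadMonomial_apply (r i : ℕ) : leadMonomial r i = if i < r then 1 else 0 := by
  simp [leadMonomial, finsetSum_apply, single_apply]

theorem leadMonomial_succ (r : ℕ) : leadMonomial (r + 1) = leadMonomial r + single r 1 :=
  Finset.sum_range_succ _ r

theorem leadMonomial_add (r₁ r₂ : ℕ) :
    leadMonomial (r₁ + r₂) = leadMonomial r₁ + mapDomain (· + r₁) (leadMonomial r₂) := by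
  simp [leadMonomial, Finset.sum_range_add, mapDomain_finsetSum, add_comm]

theorem eq_leadMonomial_of_le {m : ℕ →₀ ℕ} {r : ℕ} (hle : m ≤ leadMonomial r)
    (hpos : ∀ j < r, m j ≠ 0) : m = leadMonomial r := by
  ext j
  have hj := hle j
  rw [leadMonomial_apply] at hj ⊢
  split_ifs at hj ⊢ with hjr
  · exact le_antisymm hj (Nat.one_le_iff_ne_zero.2 (hpos j hjr))
  · exact Nat.le_zero.1 hj

end LeadingMonomial

open MvPolynomial in
theorem LDP.le_leadMonomial {r : ℕ} {f : MvPolynomial ℕ ℤ} {C : ℕ} (h : LDP r f C) :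
    ∀ m ∈ f.support, m ≤ leadMonomial r := by
  classical
  induction h with
  | const =>
    intro m hm
    rw [C_apply] at hm
    obtain rfl := Finset.mem_singleton.1 (support_monomial_subset hm)
    exact zero_le
  | @mul r₁ _ _ _ _ _ _ _ ih₁ ih₂ =>
    intro m hm
    obtain ⟨a, ha, b, hb, rfl⟩ := Finset.mem_add.1 (support_mul _ _ hm)
    rw [support_rename_of_injective (add_left_injective r₁)] at hb
    obtain ⟨b', hb', rfl⟩ := Finset.mem_image.1 hb
    rw [leadMonomial_add]
    exact add_le_add (ih₁ a ha) (Finsupp.mapDomain_mono (ih₂ b' hb'))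
  | step _ _ _ _ _ ih =>
    intro m hm
    rcases Finset.mem_union.1 (support_add hm) with hm | hm
    · rw [support_mul_X] at hm
      obtain ⟨a, ha, rfl⟩ := Finset.mem_map.1 hm
      rw [leadMonomial_succ]
      exact add_le_add_left (ih a ha) _
    · rw [C_apply] at hm
      obtain rfl := Finset.mem_singleton.1 (support_monomial_subset hm)
      exact zero_le

/-- Any monomial of a low-defect polynomial of degree `r` other
than the leading monomial `x₁⋯x_r` omits some variable minimal in the nesting
order. -/
theorem nonleading_term_omits_minimal (r : ℕ) (f : MvPolynomial ℕ ℤ)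
    (hf : ∃ C, LDP r f C) (m : ℕ →₀ ℕ) (hm : m ∈ f.support)
    (hne : m ≠ ∑ i ∈ Finset.range r, Finsupp.single i 1) :
    ∃ i < r, IsMinVar r f i ∧ m i = 0 := by
  obtain ⟨C, hC⟩ := hf
  by_contra! hmin
  exact hne (eq_leadMonomial_of_le (hC.le_leadMonomial m hm)
    fun j hj => apply_ne_zero_of_forall_isMinVar hm (fun i hi => hmin i hi.1 hi) hj)
end

section
/- Let f be a low-defect polynomial and x a variable of f. Then among the monomials appearing in f that are divisible by x there is a least one under divisibility (the key of x), and among the monomials of f not divisible by x there is a greatest one under divisibility (the anti-key of x). Moreover, for any two variables x and y of f, the following are equivalent: (a) every monomial of f divisible by x is divisible by y; (b) the key of y divides the key of x; (c) the anti-key of y divides the anti-key of x. -/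
/-!
The support of a low-defect polynomial is a sublattice of `ℕ →₀ ℕ` (closed under pointwise
`max` and `min`) containing the monomial `1`. Coefficients are nonnegative, so the support of a
product is the sumset of the supports; the two factors live in disjoint variables, and on sums
of monomials with disjoint supports `⊔` and `⊓` act factorwise. The step `f ↦ f x + c` shifts
the support by `x` and adds `1`, the bottom element.

In a finite sublattice the monomials divisible by `x` are closed under `⊓`, so their meet is
the key; those not divisible by `x` are closed under `⊔` and contain `1`, so their join is the
anti-key. The characterisations of the nesting order are then formal.
-/

open MvPolynomial Pointwise

section KeysAndAntiKeys

variable {σ : Type*} (S : Finset (σ →₀ ℕ)) (i : σ)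

/- Monomials are exponent vectors: divisibility is the pointwise order, and `X i` divides `m`
iff `m i ≠ 0`. -/
def IsKey (key : σ →₀ ℕ) : Prop :=
  key ∈ S ∧ key i ≠ 0 ∧ ∀ m ∈ S, m i ≠ 0 → key ≤ m

def IsAntiKey (akey : σ →₀ ℕ) : Prop :=
  akey ∈ S ∧ akey i = 0 ∧ ∀ m ∈ S, m i = 0 → m ≤ akey

variable {S i}

theorem exists_isKey (hS : InfClosed (S : Set (σ →₀ ℕ))) (h : ∃ m ∈ S, m i ≠ 0) :
    ∃ key, IsKey S i key := by
  obtain ⟨m, hm, hmi⟩ := h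
  have hne : (S.filter (· i ≠ 0)).Nonempty := ⟨m, Finset.mem_filter.mpr ⟨hm, hmi⟩⟩
  have hclosed : InfClosed ((S : Set (σ →₀ ℕ)) ∩ {m | m i ≠ 0}) :=
    hS.inter fun a ha b hb => by simp_all [Finsupp.inf_apply]
  obtain ⟨hmem, hkey⟩ := hclosed.finsetInf'_mem hne (f := id)
    fun m hm => by simpa using Finset.mem_filter.mp hm
  exact ⟨_, hmem, hkey, fun m hm hmi => Finset.inf'_le id (Finset.mem_filter.mpr ⟨hm, hmi⟩)⟩

theorem exists_isAntiKey (hS : SupClosed (S : Set (σ →₀ ℕ))) (h0 : 0 ∈ S) :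
    ∃ akey, IsAntiKey S i akey := by
  have hne : (S.filter (· i = 0)).Nonempty := ⟨0, Finset.mem_filter.mpr ⟨h0, rfl⟩⟩
  have hclosed : SupClosed ((S : Set (σ →₀ ℕ)) ∩ {m | m i = 0}) :=
    hS.inter fun a ha b hb => by simp_all [Finsupp.sup_apply]
  obtain ⟨hmem, hakey⟩ := hclosed.finsetSup'_mem hne (f := id)
    fun m hm => by simpa using Finset.mem_filter.mp hm
  exact ⟨_, hmem, hakey, fun m hm hmi => Finset.le_sup' id (Finset.mem_filter.mpr ⟨hm, hmi⟩)⟩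

variable {j : σ}

theorem IsKey.nested_iff_le {ki kj : σ →₀ ℕ} (hki : IsKey S i ki) (hkj : IsKey S j kj) :
    (∀ m ∈ S, m i ≠ 0 → m j ≠ 0) ↔ kj ≤ ki := by
  obtain ⟨hki_mem, hki_i, hki_min⟩ := hki
  obtain ⟨-, hkj_j, hkj_min⟩ := hkj
  refine ⟨fun h => hkj_min ki hki_mem (h ki hki_mem hki_i), fun hle m hm hmi hmj => hkj_j ?_⟩
  simpa [hmj] using (hle.trans (hki_min m hm hmi)) j

theorem IsAntiKey.nested_iff_le {ai aj : σ →₀ ℕ} (hai : IsAntiKey S i ai)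
    (haj : IsAntiKey S j aj) : (∀ m ∈ S, m i ≠ 0 → m j ≠ 0) ↔ aj ≤ ai := by
  obtain ⟨-, hai_i, hai_max⟩ := hai
  obtain ⟨haj_mem, haj_j, haj_max⟩ := haj
  refine ⟨fun h => hai_max aj haj_mem (not_imp_not.mp (h aj haj_mem) haj_j),
    fun hle m hm hmi hmj => hmi ?_⟩
  simpa [hai_i] using (haj_max m hm hmj |>.trans hle) i

end KeysAndAntiKeys

namespace Finsupp

variable {σ τ : Type*}

theorem add_sup_add_of_zero {a a' b b' : σ →₀ ℕ}
    (h : ∀ k, a k = 0 ∧ a' k = 0 ∨ b k = 0 ∧ b' k = 0) :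
    (a + b) ⊔ (a' + b') = (a ⊔ a') + (b ⊔ b') := by
  ext k
  simp only [sup_apply, add_apply]
  rcases h k with ⟨h₁, h₂⟩ | ⟨h₁, h₂⟩ <;> omega

theorem add_inf_add_of_zero {a a' b b' : σ →₀ ℕ}
    (h : ∀ k, a k = 0 ∧ a' k = 0 ∨ b k = 0 ∧ b' k = 0) :
    (a + b) ⊓ (a' + b') = (a ⊓ a') + (b ⊓ b') := by
  ext k
  simp only [inf_apply, add_apply]
  rcases h k with ⟨h₁, h₂⟩ | ⟨h₁, h₂⟩ <;> omega

theorem mapDomain_sup {g : σ → τ} (hg : Function.Injective g) (a b : σ →₀ ℕ) :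
    mapDomain g (a ⊔ b) = mapDomain g a ⊔ mapDomain g b := by
  ext k
  by_cases hk : k ∈ Set.range g
  · obtain ⟨k, rfl⟩ := hk
    simp [mapDomain_apply hg]
  · simp [mapDomain_of_notMem_range _ _ hk]

theorem mapDomain_inf {g : σ → τ} (hg : Function.Injective g) (a b : σ →₀ ℕ) :
    mapDomain g (a ⊓ b) = mapDomain g a ⊓ mapDomain g b := by
  ext k
  by_cases hk : k ∈ Set.range g
  · obtain ⟨k, rfl⟩ := hk
    simp [mapDomain_apply hg]
  · simp [mapDomain_of_notMem_range _ _ hk]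

theorem isSublattice_add {S T : Set (σ →₀ ℕ)} (hS : IsSublattice S) (hT : IsSublattice T)
    (hST : ∀ s ∈ S, ∀ t ∈ T, Disjoint s.support t.support) : IsSublattice (S + T) := by
  have hzero : ∀ a ∈ S, ∀ a' ∈ S, ∀ b ∈ T, ∀ b' ∈ T,
      ∀ k, a k = 0 ∧ a' k = 0 ∨ b k = 0 ∧ b' k = 0 := by
    intro a ha a' ha' b hb b' hb' k
    have h : ∀ s ∈ S, ∀ t ∈ T, s k = 0 ∨ t k = 0 := fun s hs t ht => by
      by_contra! hk
      exact Finset.disjoint_left.mp (hST s hs t ht) (mem_support_iff.mpr hk.1)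
        (mem_support_iff.mpr hk.2)
    have := h a ha b hb
    have := h a ha b' hb'
    have := h a' ha' b hb
    have := h a' ha' b' hb'
    omega
  constructor
  · rintro _ ⟨a, ha, b, hb, rfl⟩ _ ⟨a', ha', b', hb', rfl⟩
    rw [add_sup_add_of_zero (hzero a ha a' ha' b hb b' hb')]
    exact Set.add_mem_add (hS.1 ha ha') (hT.1 hb hb')
  · rintro _ ⟨a, ha, b, hb, rfl⟩ _ ⟨a', ha', b', hb', rfl⟩
    rw [add_inf_add_of_zero (hzero a ha a' ha' b hb b' hb')]
    exact Set.add_mem_add (hS.2 ha ha') (hT.2 hb hb')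

end Finsupp

namespace MvPolynomial

variable {σ τ R : Type*} [CommSemiring R] {p q : MvPolynomial σ R}

theorem isSublattice_support_rename [DecidableEq τ] {g : σ → τ} (hg : Function.Injective g)
    (hp : IsSublattice (p.support : Set (σ →₀ ℕ))) :
    IsSublattice ((rename g p).support : Set (τ →₀ ℕ)) := by
  rw [support_rename_of_injective hg, Finset.coe_image]
  constructor
  · rintro _ ⟨a, ha, rfl⟩ _ ⟨b, hb, rfl⟩
    exact ⟨a ⊔ b, hp.1 ha hb, Finsupp.mapDomain_sup hg a b⟩
  · rintro _ ⟨a, ha, rfl⟩ _ ⟨b, hb, rfl⟩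
    exact ⟨a ⊓ b, hp.2 ha hb, Finsupp.mapDomain_inf hg a b⟩

variable [PartialOrder R]

theorem coeff_mul_nonneg [IsOrderedRing R] (hp : ∀ m, 0 ≤ p.coeff m) (hq : ∀ m, 0 ≤ q.coeff m)
    (m : σ →₀ ℕ) : 0 ≤ (p * q).coeff m := by
  classical
  rw [coeff_mul]
  exact Finset.sum_nonneg fun x _ => mul_nonneg (hp _) (hq _)

theorem coeff_C_nonneg [IsOrderedRing R] {a : R} (ha : 0 ≤ a) (m : σ →₀ ℕ) :
    0 ≤ (C a : MvPolynomial σ R).coeff m := by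
  classical
  rw [coeff_C]
  split_ifs
  exacts [ha, le_rfl]

theorem coeff_X_nonneg [IsOrderedRing R] (s : σ) (m : σ →₀ ℕ) :
    0 ≤ (X s : MvPolynomial σ R).coeff m := by
  classical
  rw [coeff_X]
  split_ifs
  exacts [zero_le_one, le_rfl]

theorem coeff_rename_nonneg {g : σ → τ} (hg : Function.Injective g) (hp : ∀ m, 0 ≤ p.coeff m)
    (d : τ →₀ ℕ) : 0 ≤ (rename g p).coeff d := by
  by_cases hd : ∃ u, Finsupp.mapDomain g u = d
  · obtain ⟨u, rfl⟩ := hd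
    rw [coeff_rename_mapDomain g hg]
    exact hp u
  · push Not at hd
    rw [coeff_rename_eq_zero g p d fun u hu => absurd hu (hd u)]

theorem support_add_of_coeff_nonneg [DecidableEq σ] [IsOrderedRing R]
    (hp : ∀ m, 0 ≤ p.coeff m) (hq : ∀ m, 0 ≤ q.coeff m) :
    (p + q).support = p.support ∪ q.support := by
  ext m
  simp only [Finset.mem_union, mem_support_iff, coeff_add, ne_eq,
    add_eq_zero_iff_of_nonneg (hp m) (hq m), not_and_or]

theorem support_mul_of_coeff_nonneg [DecidableEq σ] [IsStrictOrderedRing R]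
    (hp : ∀ m, 0 ≤ p.coeff m) (hq : ∀ m, 0 ≤ q.coeff m) :
    (p * q).support = p.support + q.support := by
  refine (support_mul p q).antisymm fun m hm => ?_
  obtain ⟨a, ha, b, hb, rfl⟩ := Finset.mem_add.mp hm
  have hpos : 0 < p.coeff a * q.coeff b :=
    mul_pos ((hp a).lt_of_ne' (mem_support_iff.mp ha)) ((hq b).lt_of_ne' (mem_support_iff.mp hb))
  have hab : (a, b) ∈ Finset.HasAntidiagonal.antidiagonal (a + b) :=
    Finset.HasAntidiagonal.mem_antidiagonal.mpr rfl
  rw [mem_support_iff, coeff_mul]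
  refine (hpos.trans_le ?_).ne'
  exact Finset.single_le_sum (f := fun x => p.coeff x.1 * q.coeff x.2)
    (fun x _ => mul_nonneg (hp _) (hq _)) hab

theorem isSublattice_support_mul [DecidableEq σ] [IsStrictOrderedRing R]
    (hp₀ : ∀ m, 0 ≤ p.coeff m) (hq₀ : ∀ m, 0 ≤ q.coeff m) (hpq : Disjoint p.vars q.vars)
    (hp : IsSublattice (p.support : Set (σ →₀ ℕ))) (hq : IsSublattice (q.support : Set (σ →₀ ℕ))) :
    IsSublattice ((p * q).support : Set (σ →₀ ℕ)) := by
  rw [support_mul_of_coeff_nonneg hp₀ hq₀, Finset.coe_add]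
  exact Finsupp.isSublattice_add hp hq fun s hs t ht =>
    hpq.mono (support_subset_vars_of_mem_support hs) (support_subset_vars_of_mem_support ht)

end MvPolynomial

namespace LDP

theorem vars_subset_range {r n : ℕ} {f : MvPolynomial ℕ ℤ} (h : LDP r f n) :
    f.vars ⊆ Finset.range r := by
  classical
  induction h with
  | const => simp only [vars_C, Finset.empty_subset]
  | @mul r₁ r₂ _ _ _ _ _ _ ih₁ ih₂ =>
    refine (vars_mul _ _).trans (Finset.union_subset ?_ ?_)
    · exact ih₁.trans (Finset.range_subset_range.mpr (Nat.le_add_right r₁ r₂))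
    · refine (vars_rename _ _).trans fun k hk => ?_
      obtain ⟨l, hl, rfl⟩ := Finset.mem_image.mp hk
      have := Finset.mem_range.mp (ih₂ hl)
      exact Finset.mem_range.mpr (by omega)
  | step _ _ _ _ _ ih =>
    refine (vars_add_subset _ _).trans (Finset.union_subset ((vars_mul _ _).trans ?_) ?_)
    · exact Finset.union_subset (ih.trans (Finset.range_subset_range.mpr (Nat.le_succ _)))
        (by simp [vars_X])
    · rw [vars_C]
      exact Finset.empty_subset _

theorem coeff_nonneg {r n : ℕ} {f : MvPolynomial ℕ ℤ} (h : LDP r f n) (m : ℕ →₀ ℕ) :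
    0 ≤ f.coeff m := by
  induction h generalizing m with
  | const k => exact coeff_C_nonneg (Int.natCast_nonneg k) m
  | mul _ _ ih₁ ih₂ =>
    exact coeff_mul_nonneg ih₁ (coeff_rename_nonneg (add_left_injective _) ih₂) m
  | @step r _ _ c _ _ _ _ ih =>
    rw [coeff_add]
    exact add_nonneg (coeff_mul_nonneg ih (coeff_X_nonneg r) m)
      (coeff_C_nonneg (Int.natCast_nonneg c) m)

theorem zero_mem_support {r n : ℕ} {f : MvPolynomial ℕ ℤ} (h : LDP r f n) : 0 ∈ f.support := by
  rw [mem_support_iff, ← constantCoeff_eq]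
  induction h with
  | const _ _ hk => simpa using hk.ne'
  | mul _ _ ih₁ ih₂ => simpa [constantCoeff_rename] using ⟨ih₁, ih₂⟩
  | step _ _ hc => simpa using hc.ne'

theorem isSublattice_support {r n : ℕ} {f : MvPolynomial ℕ ℤ} (h : LDP r f n) :
    IsSublattice (f.support : Set (ℕ →₀ ℕ)) := by
  classical
  induction h with
  | const _ _ hk =>
    rw [support_C, if_neg (by exact_mod_cast hk.ne'), Finset.coe_singleton]
    exact isSublattice_singleton (a := 0)
  | mul h₁ h₂ ih₁ ih₂ =>
    refine isSublattice_support_mul h₁.coeff_nonneg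
      (coeff_rename_nonneg (add_left_injective _) h₂.coeff_nonneg) ?_ ih₁
      (isSublattice_support_rename (add_left_injective _) ih₂)
    refine Finset.disjoint_left.mpr fun k hk₁ hk₂ => ?_
    obtain ⟨l, -, rfl⟩ := Finset.mem_image.mp (vars_rename _ _ hk₂)
    have := Finset.mem_range.mp (h₁.vars_subset_range hk₁)
    omega
  | @step r f _ c _ hc _ h ih =>
    have hfX : IsSublattice ((f * X r).support : Set (ℕ →₀ ℕ)) := by
      refine isSublattice_support_mul h.coeff_nonneg (coeff_X_nonneg r) ?_ ih
        (by simp [support_X])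
      rw [vars_X, Finset.disjoint_singleton_right]
      exact fun hr => (Finset.mem_range.mp (h.vars_subset_range hr)).false
    rw [support_add_of_coeff_nonneg (coeff_mul_nonneg h.coeff_nonneg (coeff_X_nonneg r))
      (coeff_C_nonneg (Int.natCast_nonneg c)), support_C, if_neg (by exact_mod_cast hc.ne'),
      Finset.coe_union, Finset.coe_singleton, Set.union_singleton]
    exact ⟨hfX.1.insert_lowerBounds fun _ _ => zero_le,
      hfX.2.insert_lowerBounds fun _ _ => zero_le⟩

end LDP

theorem keys_antikeys_general (f : MvPolynomial ℕ ℤ) (hf : LowDefectPoly f)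
    (i j : ℕ) (hi : i ∈ f.vars) :
    (∃ key ∈ f.support, key i ≠ 0 ∧ ∀ m ∈ f.support, m i ≠ 0 → key ≤ m) ∧
    (∃ akey ∈ f.support, akey i = 0 ∧ ∀ m ∈ f.support, m i = 0 → m ≤ akey) ∧
    (∀ keyi keyj : ℕ →₀ ℕ,
      (keyi ∈ f.support ∧ keyi i ≠ 0 ∧ ∀ m ∈ f.support, m i ≠ 0 → keyi ≤ m) →
      (keyj ∈ f.support ∧ keyj j ≠ 0 ∧ ∀ m ∈ f.support, m j ≠ 0 → keyj ≤ m) →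
      ((∀ m ∈ f.support, m i ≠ 0 → m j ≠ 0) ↔ keyj ≤ keyi)) ∧
    (∀ akeyi akeyj : ℕ →₀ ℕ,
      (akeyi ∈ f.support ∧ akeyi i = 0 ∧ ∀ m ∈ f.support, m i = 0 → m ≤ akeyi) →
      (akeyj ∈ f.support ∧ akeyj j = 0 ∧ ∀ m ∈ f.support, m j = 0 → m ≤ akeyj) →
      ((∀ m ∈ f.support, m i ≠ 0 → m j ≠ 0) ↔ akeyj ≤ akeyi)) := by
  obtain ⟨r, n, hf⟩ := hf
  have hlattice := hf.isSublattice_support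
  have hdivisible : ∃ m ∈ f.support, m i ≠ 0 := by
    obtain ⟨m, hm, hmi⟩ := (mem_vars_iff_mem_support i).mp hi
    exact ⟨m, hm, Finsupp.mem_support_iff.mp hmi⟩
  exact ⟨exists_isKey hlattice.2 hdivisible, exists_isAntiKey hlattice.1 hf.zero_mem_support,
    fun _ _ => IsKey.nested_iff_le, fun _ _ => IsAntiKey.nested_iff_le⟩

/-- Keys and anti-keys. Every variable of a low-defect
polynomial has a key (least monomial divisible by it) and an anti-key (greatest
monomial not divisible by it), and the nesting order is detected by divisibility
of keys, or of anti-keys.  Monomials are recorded by their exponent vectors, so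
that divisibility of monomials is the pointwise order on `ℕ →₀ ℕ`. -/
theorem keys_antikeys (f : MvPolynomial ℕ ℤ) (hf : LowDefectPoly f)
    (i j : ℕ) (hi : i ∈ f.vars) (hj : j ∈ f.vars) :
    (∃ key ∈ f.support, key i ≠ 0 ∧ ∀ m ∈ f.support, m i ≠ 0 → key ≤ m) ∧
    (∃ akey ∈ f.support, akey i = 0 ∧ ∀ m ∈ f.support, m i = 0 → m ≤ akey) ∧
    (∀ keyi keyj : ℕ →₀ ℕ,
      (keyi ∈ f.support ∧ keyi i ≠ 0 ∧ ∀ m ∈ f.support, m i ≠ 0 → keyi ≤ m) →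
      (keyj ∈ f.support ∧ keyj j ≠ 0 ∧ ∀ m ∈ f.support, m j ≠ 0 → keyj ≤ m) →
      ((∀ m ∈ f.support, m i ≠ 0 → m j ≠ 0) ↔ keyj ≤ keyi)) ∧
    (∀ akeyi akeyj : ℕ →₀ ℕ,
      (akeyi ∈ f.support ∧ akeyi i = 0 ∧ ∀ m ∈ f.support, m i = 0 → m ≤ akeyi) →
      (akeyj ∈ f.support ∧ akeyj j = 0 ∧ ∀ m ∈ f.support, m j = 0 → m ≤ akeyj) →
      ((∀ m ∈ f.support, m i ≠ 0 → m j ≠ 0) ↔ akeyj ≤ akeyi)) :=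
  keys_antikeys_general f hf i j hi
end

section
/- For every real number α with 0 ≤ α < 1, the set of leaders n with δ(n) ≤ α is finite. -/
/-! An efficient representation of a leader `n` with `δ(n) ≤ α < 1` is either a sum `a + b`
(`b ≤ a`) or a product `a * b`. In the sum case `‖b‖ ≤ α + 3 log₃ ((a + b) / a) < 3`, which
forces `b ≤ 2` and then bounds `a` in terms of `α`. In the product case both factors are
leaders that are not powers of `3`, and their defects add up. Since `9 n³ ≤ 8 · 3^‖n‖` for every
`n` that is not a power of `3`, each factor has defect at least `2 - 3 log₃ 2 > 0`; so a product
tree can only have boundedly many leaves, each of them bounded. -/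

lemma CpxW.one_le {n k : ℕ} (h : CpxW n k) : 1 ≤ n ∧ 1 ≤ k := by
  induction h with
  | one => exact ⟨le_rfl, le_rfl⟩
  | add _ _ iha _ => exact ⟨le_add_right iha.1, le_add_right iha.2⟩
  | mul _ _ iha ihb => exact ⟨Nat.mul_le_mul iha.1 ihb.1, le_add_right iha.2⟩

lemma cpxW_self {n : ℕ} (hn : 1 ≤ n) : CpxW n n := by
  induction n, hn using Nat.le_induction with
  | base => exact CpxW.one
  | succ m _ ih => exact CpxW.add ih CpxW.one

lemma cpx_le {n k : ℕ} (h : CpxW n k) : cpx n ≤ k := Nat.sInf_le h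

lemma cpxW_cpx {n : ℕ} (hn : 1 ≤ n) : CpxW n (cpx n) := Nat.sInf_mem ⟨n, cpxW_self hn⟩

lemma cpx_add_le {a b : ℕ} (ha : 1 ≤ a) (hb : 1 ≤ b) : cpx (a + b) ≤ cpx a + cpx b :=
  cpx_le ((cpxW_cpx ha).add (cpxW_cpx hb))

lemma cpx_mul_le {a b : ℕ} (ha : 1 ≤ a) (hb : 1 ≤ b) : cpx (a * b) ≤ cpx a + cpx b :=
  cpx_le ((cpxW_cpx ha).mul (cpxW_cpx hb))

lemma cpx_three_pow_mul_le (j : ℕ) {c : ℕ} (hc : 1 ≤ c) : cpx (3 ^ j * c) ≤ 3 * j + cpx c := by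
  induction j with
  | zero => simp
  | succ j ih =>
    calc cpx (3 ^ (j + 1) * c) = cpx (3 * (3 ^ j * c)) := by rw [pow_succ, mul_comm _ 3, mul_assoc]
      _ ≤ cpx 3 + cpx (3 ^ j * c) :=
          cpx_mul_le (by norm_num) (Nat.one_le_iff_ne_zero.2 (by positivity))
      _ ≤ 3 + (3 * j + cpx c) := add_le_add (cpx_le (cpxW_self (by norm_num))) ih
      _ = 3 * (j + 1) + cpx c := by ring

theorem Nat.induction_add_three {P : ℕ → Prop} (base : ∀ n ≤ 6, P n)
    (step : ∀ n, 4 ≤ n → P n → P (n + 3)) (n : ℕ) : P n := by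
  induction n using Nat.strong_induction_on with
  | _ n ih =>
    by_cases hn : n ≤ 6
    · exact base n hn
    · obtain ⟨m, rfl⟩ : ∃ m, n = m + 3 := ⟨n - 3, by omega⟩
      exact step m (by omega) (ih m (by omega))

theorem Nat.induction₂_add_three {P : ℕ → ℕ → Prop} (base : ∀ a ≤ 6, ∀ b ≤ 6, P a b)
    (left : ∀ a b, 4 ≤ a → P a b → P (a + 3) b) (right : ∀ a b, 4 ≤ b → P a b → P a (b + 3))
    (a b : ℕ) : P a b :=
  Nat.induction_add_three (P := fun a => ∀ b, P a b)
    (fun a ha => Nat.induction_add_three (base a ha) (right a))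
    (fun a ha h b => left a b ha (h b)) a b

/-- The largest integer of complexity at most `k`: `3^j`, `4 * 3^(j-1)`, `2 * 3^j` for
`k = 3j, 3j+1, 3j+2` (for `k ≥ 2`). -/
def cpxMax : ℕ → ℕ
  | 0 => 0
  | 1 => 1
  | 2 => 2
  | 3 => 3
  | 4 => 4
  | 5 => 6
  | 6 => 9
  | n + 7 => 3 * cpxMax (n + 4)

/-- The largest integer of complexity at most `k` that is not a power of `3`. -/
def cpxMaxNonPow : ℕ → ℕ
  | 0 => 0
  | 1 => 0
  | 2 => 2
  | 3 => 2
  | 4 => 4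
  | 5 => 6
  | 6 => 8
  | n + 7 => 3 * cpxMaxNonPow (n + 4)

lemma cpxMax_add_three {k : ℕ} (hk : 4 ≤ k) : cpxMax (k + 3) = 3 * cpxMax k := by
  obtain ⟨n, rfl⟩ : ∃ n, k = n + 4 := ⟨k - 4, by omega⟩
  rfl

lemma cpxMaxNonPow_add_three {k : ℕ} (hk : 4 ≤ k) :
    cpxMaxNonPow (k + 3) = 3 * cpxMaxNonPow k := by
  obtain ⟨n, rfl⟩ : ∃ n, k = n + 4 := ⟨k - 4, by omega⟩
  rfl

lemma cpxMax_add_le_cpxMax_add (a b : ℕ) : cpxMax a + cpxMax b ≤ cpxMax (a + b) := by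
  induction a, b using Nat.induction₂_add_three with
  | base => decide +revert
  | left a b ha ih =>
    rw [add_right_comm, cpxMax_add_three ha, cpxMax_add_three (by omega)]; omega
  | right a b hb ih =>
    rw [← add_assoc, cpxMax_add_three hb, cpxMax_add_three (by omega)]; omega

lemma cpxMax_mul_le_cpxMax_add (a b : ℕ) : cpxMax a * cpxMax b ≤ cpxMax (a + b) := by
  induction a, b using Nat.induction₂_add_three with
  | base => decide +revert
  | left a b ha ih =>
    rw [add_right_comm, cpxMax_add_three ha, cpxMax_add_three (by omega), mul_assoc]
    exact Nat.mul_le_mul_left 3 ih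
  | right a b hb ih =>
    rw [← add_assoc, cpxMax_add_three hb, cpxMax_add_three (by omega), mul_left_comm]
    exact Nat.mul_le_mul_left 3 ih

lemma cpxMax_add_le_cpxMaxNonPow_add {a b : ℕ} (ha : 1 ≤ a) (hb : 1 ≤ b) (hab : a + b ≠ 3) :
    cpxMax a + cpxMax b ≤ cpxMaxNonPow (a + b) := by
  induction a, b using Nat.induction₂_add_three with
  | base => decide +revert
  | left a b ha' ih =>
    rw [add_right_comm, cpxMax_add_three ha', cpxMaxNonPow_add_three (by omega)]
    have := ih (by omega) hb (by omega); omega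
  | right a b hb' ih =>
    rw [← add_assoc, cpxMax_add_three hb', cpxMaxNonPow_add_three (by omega)]
    have := ih ha (by omega) (by omega); omega

lemma cpxMaxNonPow_mul_le_cpxMaxNonPow_add (a b : ℕ) :
    cpxMaxNonPow a * cpxMax b ≤ cpxMaxNonPow (a + b) := by
  induction a, b using Nat.induction₂_add_three with
  | base => decide +revert
  | left a b ha ih =>
    rw [add_right_comm, cpxMaxNonPow_add_three ha, cpxMaxNonPow_add_three (by omega), mul_assoc]
    exact Nat.mul_le_mul_left 3 ih
  | right a b hb ih =>
    rw [← add_assoc, cpxMax_add_three hb, cpxMaxNonPow_add_three (by omega), mul_left_comm]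
    exact Nat.mul_le_mul_left 3 ih

lemma cpxMax_cube_le (k : ℕ) : cpxMax k ^ 3 ≤ 3 ^ k := by
  induction k using Nat.induction_add_three with
  | base => decide +revert
  | step k hk ih =>
    rw [cpxMax_add_three hk, mul_pow, pow_add]
    omega

lemma cpxMaxNonPow_cube_le (k : ℕ) : 9 * cpxMaxNonPow k ^ 3 ≤ 8 * 3 ^ k := by
  induction k using Nat.induction_add_three with
  | base => decide +revert
  | step k hk ih =>
    rw [cpxMaxNonPow_add_three hk, mul_pow, pow_add]
    omega

def IsPowThree (n : ℕ) : Prop := ∃ i, n = 3 ^ i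

lemma CpxW.le_cpxMax {n k : ℕ} (h : CpxW n k) : n ≤ cpxMax k := by
  induction h with
  | one => decide
  | add _ _ iha ihb => exact (add_le_add iha ihb).trans (cpxMax_add_le_cpxMax_add _ _)
  | mul _ _ iha ihb => exact (Nat.mul_le_mul iha ihb).trans (cpxMax_mul_le_cpxMax_add _ _)

lemma CpxW.le_cpxMaxNonPow {n k : ℕ} (h : CpxW n k) (hn : ¬ IsPowThree n) :
    n ≤ cpxMaxNonPow k := by
  induction h with
  | one => exact absurd ⟨0, rfl⟩ hn
  | @add a b m m' wa wb =>
    have hab := add_le_add wa.le_cpxMax wb.le_cpxMax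
    by_cases h3 : m + m' = 3
    · -- `cpxMaxNonPow 3 = 2`, while a sum of complexity `3` can reach `3 = 3 ^ 1`
      have : a + b ≠ 3 := fun h => hn ⟨1, h⟩
      have := hab.trans (cpxMax_add_le_cpxMax_add m m')
      rw [h3] at this ⊢
      change a + b ≤ 3 at this
      change a + b ≤ 2
      omega
    · exact hab.trans (cpxMax_add_le_cpxMaxNonPow_add wa.one_le.2 wb.one_le.2 h3)
  | @mul a b m m' wa wb iha ihb =>
    by_cases ha : IsPowThree a
    · have hb : ¬ IsPowThree b := by
        rintro ⟨j, rfl⟩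
        obtain ⟨i, rfl⟩ := ha
        exact hn ⟨i + j, (pow_add 3 i j).symm⟩
      calc a * b ≤ cpxMaxNonPow m' * cpxMax m := by
            rw [mul_comm]; exact Nat.mul_le_mul (ihb hb) wa.le_cpxMax
        _ ≤ cpxMaxNonPow (m + m') := by
            rw [add_comm]; exact cpxMaxNonPow_mul_le_cpxMaxNonPow_add m' m
    · exact (Nat.mul_le_mul (iha ha) wb.le_cpxMax).trans (cpxMaxNonPow_mul_le_cpxMaxNonPow_add _ _)

lemma cube_le_three_pow_cpx {n : ℕ} (hn : 1 ≤ n) : n ^ 3 ≤ 3 ^ cpx n :=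
  (Nat.pow_le_pow_left (cpxW_cpx hn).le_cpxMax 3).trans (cpxMax_cube_le _)

lemma nine_mul_cube_le_of_not_isPowThree {n : ℕ} (hn : 1 ≤ n) (h : ¬ IsPowThree n) :
    9 * n ^ 3 ≤ 8 * 3 ^ cpx n :=
  (Nat.mul_le_mul_left 9 (Nat.pow_le_pow_left ((cpxW_cpx hn).le_cpxMaxNonPow h) 3)).trans
    (cpxMaxNonPow_cube_le _)

lemma three_mul_le_cpx_three_pow (i : ℕ) : 3 * i ≤ cpx (3 ^ i) := by
  have h := cube_le_three_pow_cpx (Nat.one_le_pow i 3 (by norm_num))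
  rwa [← pow_mul, mul_comm, Nat.pow_le_pow_iff_right (by norm_num)] at h

lemma logb_le_of_mul_cube_le {c d x : ℝ} (hc : 0 < c) (hx : 0 < x) {k : ℕ}
    (h : c * x ^ 3 ≤ d * 3 ^ k) : Real.logb 3 c + 3 * Real.logb 3 x ≤ Real.logb 3 d + k := by
  have hd : 0 < d :=
    pos_of_mul_pos_left ((by positivity : 0 < c * x ^ 3).trans_le h) (by positivity)
  have := Real.logb_le_logb_of_le (by norm_num : (1 : ℝ) < 3) (by positivity) h
  rwa [Real.logb_mul hc.ne' (by positivity), Real.logb_mul hd.ne' (by positivity), Real.logb_pow,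
    Real.logb_pow, Real.logb_self_eq_one (by norm_num), mul_one] at this

lemma defect_nonneg {n : ℕ} (hn : 1 ≤ n) : 0 ≤ defect n := by
  have h : (1 : ℝ) * (n : ℝ) ^ 3 ≤ 1 * 3 ^ cpx n := by
    simpa using (by exact_mod_cast cube_le_three_pow_cpx hn : ((n ^ 3 : ℕ) : ℝ) ≤ (3 ^ cpx n : ℕ))
  have := logb_le_of_mul_cube_le one_pos (by positivity) h
  rw [Real.logb_one] at this
  unfold defect
  linarith

lemma sub_logb_le_defect_of_not_isPowThree {n : ℕ} (hn : 1 ≤ n) (h : ¬ IsPowThree n) :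
    2 - 3 * Real.logb 3 2 ≤ defect n := by
  have hle : (9 : ℝ) * (n : ℝ) ^ 3 ≤ 8 * 3 ^ cpx n := by
    exact_mod_cast nine_mul_cube_le_of_not_isPowThree hn h
  have := logb_le_of_mul_cube_le (by norm_num) (by positivity) hle
  rw [show (9 : ℝ) = 3 ^ 2 by norm_num, show (8 : ℝ) = 2 ^ 3 by norm_num, Real.logb_pow,
    Real.logb_pow, Real.logb_self_eq_one (by norm_num)] at this
  unfold defect
  push_cast at this
  linarith

lemma three_mul_logb_three_two_lt_two : 3 * Real.logb 3 2 < 2 := by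
  have h := Real.logb_lt_logb (b := 3) (by norm_num) (by norm_num : (0 : ℝ) < 2 ^ 3)
    (by norm_num : (2 : ℝ) ^ 3 < 3 ^ 2)
  rw [Real.logb_pow, Real.logb_pow, Real.logb_self_eq_one (by norm_num)] at h
  push_cast at h
  linarith

lemma eq_one_or_cpx_eq_add_or_mul {n : ℕ} (hn : 1 ≤ n) :
    n = 1 ∨ (∃ a b, n = a + b ∧ 1 ≤ b ∧ b ≤ a ∧ cpx n = cpx a + cpx b) ∨
      ∃ a b, n = a * b ∧ 2 ≤ a ∧ 2 ≤ b ∧ cpx n = cpx a + cpx b := by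
  obtain ⟨k, hk, w⟩ : ∃ k, cpx n = k ∧ CpxW n k := ⟨_, rfl, cpxW_cpx hn⟩
  cases w with
  | one => exact Or.inl rfl
  | @add a b m m' wa wb =>
    have hsum : cpx (a + b) = cpx a + cpx b := by
      have := cpx_add_le wa.one_le.1 wb.one_le.1
      have := cpx_le wa; have := cpx_le wb
      omega
    rcases le_total b a with hba | hab
    · exact Or.inr (Or.inl ⟨a, b, rfl, wb.one_le.1, hba, hsum⟩)
    · exact Or.inr (Or.inl ⟨b, a, add_comm a b, wa.one_le.1, hab, by rw [hsum, add_comm]⟩)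
  | @mul a b m m' wa wb =>
    have hsum : cpx (a * b) = cpx a + cpx b := by
      have := cpx_mul_le wa.one_le.1 wb.one_le.1
      have := cpx_le wa; have := cpx_le wb
      omega
    have ha : a ≠ 1 := by
      rintro rfl
      have := cpx_le wb; have := wa.one_le.2
      rw [one_mul] at hk; omega
    have hb : b ≠ 1 := by
      rintro rfl
      have := cpx_le wa; have := wb.one_le.2
      rw [mul_one] at hk; omega
    have := wa.one_le.1; have := wb.one_le.1
    exact Or.inr (Or.inr ⟨a, b, rfl, by omega, by omega, hsum⟩)

lemma defect_mul {a b : ℕ} (ha : 1 ≤ a) (hb : 1 ≤ b) (hsum : cpx (a * b) = cpx a + cpx b) :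
    defect (a * b) = defect a + defect b := by
  unfold defect
  rw [hsum, Nat.cast_mul, Real.logb_mul (by positivity) (by positivity)]
  push_cast
  ring

lemma IsLeader.of_mul {a b : ℕ} (ha : 1 ≤ a) (hb : 1 ≤ b) (hsum : cpx (a * b) = cpx a + cpx b)
    (hL : IsLeader (a * b)) : IsLeader a := by
  refine ⟨ha, ?_⟩
  rintro ⟨t, rfl⟩
  have hL3 := hL.2 ⟨t * b, by ring⟩
  rw [mul_assoc] at hL3 hsum
  rw [Nat.mul_div_cancel_left _ three_pos] at hL3 ⊢
  have := cpx_mul_le (a := t) (by omega) hb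
  omega

lemma IsLeader.not_isPowThree_of_mul {a b : ℕ} (ha : 2 ≤ a) (hb : 1 ≤ b)
    (hsum : cpx (a * b) = cpx a + cpx b) (hL : IsLeader (a * b)) : ¬ IsPowThree a := by
  rintro ⟨i, rfl⟩
  obtain ⟨j, rfl⟩ : ∃ j, i = j + 1 := ⟨i - 1, by rcases i with _ | i <;> simp_all⟩
  have hL3 := hL.2 ⟨3 ^ j * b, by ring⟩
  rw [pow_succ, mul_comm _ 3, mul_assoc, Nat.mul_div_cancel_left _ (by norm_num),
    ← mul_assoc, mul_comm 3, ← pow_succ] at hL3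
  have := cpx_three_pow_mul_le j hb
  have := three_mul_le_cpx_three_pow (j + 1)
  omega

/-- Bound on the leaders of defect at most `α` whose most efficient representation is a sum. -/
noncomputable def additiveBound (α : ℝ) : ℝ := 2 / ((3 : ℝ) ^ ((1 - α) / 3) - 1) + 2

lemma cpx_le_defect_add_logb {a b : ℕ} (ha : 1 ≤ a) (hsum : cpx (a + b) = cpx a + cpx b) :
    (cpx b : ℝ) ≤ defect (a + b) + 3 * Real.logb 3 (((a : ℝ) + b) / a) := by
  have := defect_nonneg ha
  have hb : (0 : ℝ) ≤ b := b.cast_nonneg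
  unfold defect at *
  rw [Real.logb_div (by positivity) (by positivity), hsum]
  push_cast
  linarith

lemma additiveBound_denom_pos {α : ℝ} (hα : α < 1) : 0 < (3 : ℝ) ^ ((1 - α) / 3) - 1 :=
  sub_pos.2 (Real.one_lt_rpow (by norm_num) (by linarith))

lemma two_le_additiveBound {α : ℝ} (hα : α < 1) : 2 ≤ additiveBound α := by
  unfold additiveBound
  linarith [div_pos two_pos (additiveBound_denom_pos hα)]

lemma le_two_of_cpx_add_eq {α : ℝ} (hα : α < 1) {a b : ℕ} (hb : 1 ≤ b) (hba : b ≤ a)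
    (hsum : cpx (a + b) = cpx a + cpx b) (hd : defect (a + b) ≤ α) : b ≤ 2 := by
  -- `‖b‖ ≤ α + 3 log₃ 2 < 3`
  have ha : (1 : ℝ) ≤ a := by exact_mod_cast hb.trans hba
  have hba' : (b : ℝ) ≤ a := by exact_mod_cast hba
  have hlog : Real.logb 3 (((a : ℝ) + b) / a) ≤ Real.logb 3 2 :=
    Real.logb_le_logb_of_le (by norm_num) (by positivity)
      ((div_le_iff₀ (by positivity)).2 (by linarith))
  have hcpx : cpx b < 3 := by
    have := three_mul_logb_three_two_lt_two
    have := cpx_le_defect_add_logb (hb.trans hba) hsum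
    exact_mod_cast (show (cpx b : ℝ) < 3 by linarith)
  have hcube : b ^ 3 < 3 ^ 3 :=
    ((cube_le_three_pow_cpx hb).trans (Nat.pow_le_pow_right three_pos (by omega))).trans_lt
      (by norm_num : 3 ^ 2 < 3 ^ 3)
  have := (Nat.pow_lt_pow_iff_left (by norm_num)).1 hcube
  omega

lemma add_le_additiveBound {α : ℝ} (hα : α < 1) {a b : ℕ} (hb : 1 ≤ b) (hba : b ≤ a)
    (hsum : cpx (a + b) = cpx a + cpx b) (hd : defect (a + b) ≤ α) :
    ((a + b : ℕ) : ℝ) ≤ additiveBound α := by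
  have hb2 : (b : ℝ) ≤ 2 := by exact_mod_cast le_two_of_cpx_add_eq hα hb hba hsum hd
  have ha : (1 : ℝ) ≤ a := by exact_mod_cast hb.trans hba
  have hlog : (1 - α) / 3 ≤ Real.logb 3 (((a : ℝ) + 2) / a) := by
    have : Real.logb 3 (((a : ℝ) + b) / a) ≤ Real.logb 3 (((a : ℝ) + 2) / a) :=
      Real.logb_le_logb_of_le (by norm_num) (by positivity) (by gcongr)
    have : (1 : ℝ) ≤ cpx b := by exact_mod_cast (cpxW_cpx hb).one_le.2
    linarith [cpx_le_defect_add_logb (hb.trans hba) hsum]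
  have hpow := (Real.le_logb_iff_rpow_le (by norm_num) (by positivity)).1 hlog
  have ha2 : (a : ℝ) ≤ 2 / ((3 : ℝ) ^ ((1 - α) / 3) - 1) := by
    rw [le_div_iff₀ (additiveBound_denom_pos hα)]
    rw [le_div_iff₀ (by positivity)] at hpow
    linarith
  unfold additiveBound
  push_cast
  linarith

lemma IsLeader.le_additiveBound_or_eq_mul {α : ℝ} (hα : α < 1) {n : ℕ} (hL : IsLeader n)
    (hd : defect n ≤ α) :
    (n : ℝ) ≤ additiveBound α ∨ ∃ a b, n = a * b ∧ IsLeader a ∧ IsLeader b ∧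
      ¬ IsPowThree a ∧ ¬ IsPowThree b ∧ defect n = defect a + defect b := by
  rcases eq_one_or_cpx_eq_add_or_mul hL.1 with rfl | ⟨a, b, rfl, hb, hba, hsum⟩ |
    ⟨a, b, rfl, ha, hb, hsum⟩
  · left; push_cast; linarith [two_le_additiveBound hα]
  · exact Or.inl (add_le_additiveBound hα hb hba hsum hd)
  · have hsum' : cpx (b * a) = cpx b + cpx a := by rw [mul_comm, hsum, add_comm]
    have hL' : IsLeader (b * a) := mul_comm a b ▸ hL
    exact Or.inr ⟨a, b, rfl, hL.of_mul (by omega) (by omega) hsum,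
      hL'.of_mul (by omega) (by omega) hsum', hL.not_isPowThree_of_mul ha (by omega) hsum,
      hL'.not_isPowThree_of_mul hb (by omega) hsum', defect_mul (by omega) (by omega) hsum⟩

lemma IsLeader.le_additiveBound_pow {α : ℝ} (hα : α < 1) (s : ℕ) {n : ℕ} (hL : IsLeader n)
    (hd : defect n ≤ α) (hs : defect n < s * (2 - 3 * Real.logb 3 2)) :
    (n : ℝ) ≤ additiveBound α ^ 2 ^ s := by
  induction s generalizing n with
  | zero =>
    have := defect_nonneg hL.1
    simp only [CharP.cast_eq_zero, zero_mul] at hs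
    linarith
  | succ s ih =>
    have hB := two_le_additiveBound hα
    rcases hL.le_additiveBound_or_eq_mul hα hd with hn | ⟨a, b, rfl, hLa, hLb, ha, hb, hdab⟩
    · exact hn.trans (le_self_pow₀ (by linarith) (by positivity))
    have hda := sub_logb_le_defect_of_not_isPowThree hLa.1 ha
    have hdb := sub_logb_le_defect_of_not_isPowThree hLb.1 hb
    have hda0 := defect_nonneg hLa.1
    have hdb0 := defect_nonneg hLb.1
    push_cast at hs ⊢
    calc (a : ℝ) * b ≤ additiveBound α ^ 2 ^ s * additiveBound α ^ 2 ^ s :=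
          mul_le_mul (ih hLa (by linarith) (by linarith)) (ih hLb (by linarith) (by linarith))
            (by positivity) (by positivity)
      _ = additiveBound α ^ 2 ^ (s + 1) := by rw [← pow_add, pow_succ, mul_two]

theorem leaders_below_one_finite_general (α : ℝ) (h1 : α < 1) :
    {n : ℕ | IsLeader n ∧ defect n ≤ α}.Finite := by
  have hδ : 0 < 2 - 3 * Real.logb 3 2 := by linarith [three_mul_logb_three_two_lt_two]
  obtain ⟨s, hs⟩ := exists_nat_gt (α / (2 - 3 * Real.logb 3 2))
  refine (Set.finite_Iic ⌊additiveBound α ^ 2 ^ s⌋₊).subset fun n ⟨hL, hd⟩ => ?_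
  exact Nat.le_floor (hL.le_additiveBound_pow h1 s hd (by rw [div_lt_iff₀ hδ] at hs; linarith))

/-- For `0 ≤ α < 1`, the set of leaders of defect at most `α`
is finite. -/
theorem leaders_below_one_finite (α : ℝ) (h0 : 0 ≤ α) (h1 : α < 1) :
    {n : ℕ | IsLeader n ∧ defect n ≤ α}.Finite :=
  leaders_below_one_finite_general α h1
end
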